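/- Let F = 𝔣(η) and G = 𝔤(η) be real-valued random variables determined by the Poisson measure η, let k ∈ ℕ and z₁,…,z_k ∈ Z. Then D^{(k)}_{z₁,…,z_k}(FG) = Σ_{W : |W| = k} K(D^{[W]}_{z₁,…,z_k}(F, G)), where the sum runs over all words W of length k in the alphabet {L, R, B}. -/

import Mathlib

/-!
The add-one cost obeys the Leibniz rule `D(XY) = DX·Y + X·DY + DX·DY`, whose three terms are
exactly `K(D^L(X,Y))`, `K(D^R(X,Y))`, `K(D^B(X,Y))`. Since `D` is additive, applying the rule
once more to every term of the expansion of `D^{(m)}(XY)` turns a sum over words of length `m`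
into one over words of length `m + 1`.
-/

open MeasureTheory ProbabilityTheory Filter

namespace PoissonFMT

variable {Z : Type*} [MeasurableSpace Z]

/-- The product measure `μ^p` on `Z^p`. -/
noncomputable def pmeas (μ : Measure Z) (p : ℕ) : Measure (Fin p → Z) :=
  Measure.pi fun _ => μ


/-- A Poisson random measure on `(Z, 𝒵)` with σ-finite control `μ`,
defined on the probability space `(Ω, ℱ, P)`. -/
structure PoissonRandomMeasure (μ : Measure Z) {Ω : Type*} [MeasurableSpace Ω]
    (P : Measure Ω) : Type _ where
  η : Ω → Measure Z
  measurable_η : Measurable η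
  point_valued : ∀ ω (B : Set Z), (∃ k : ℕ, η ω B = k) ∨ η ω B = ⊤
  sigmaFinite_η : ∀ ω, SigmaFinite (η ω)
  law_finite : ∀ B : Set Z, MeasurableSet B → μ B ≠ ⊤ → ∀ k : ℕ,
    P {ω | η ω B = k} =
      ENNReal.ofReal (Real.exp (-(μ B).toReal) * (μ B).toReal ^ k / k.factorial)
  law_infinite : ∀ B : Set Z, MeasurableSet B → μ B = ⊤ → P {ω | η ω B = ⊤} = 1
  indep : ∀ (n : ℕ) (B : Fin n → Set Z), (∀ i, MeasurableSet (B i)) →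
    Pairwise (Function.onFun Disjoint B) →
    iIndepFun (fun i ω => η ω (B i)) P

/-- The add-one-cost operator `D_z⁺` acting on a representative `𝔣 : N_σ → ℝ`:
`(D_z⁺ 𝔣)(χ) = 𝔣(χ + δ_z) - 𝔣(χ)`. -/
noncomputable def addCost (z : Z) (𝔣 : Measure Z → ℝ) : Measure Z → ℝ :=
  fun χ => 𝔣 (χ + Measure.dirac z) - 𝔣 χ

/-- The iterated add-one-cost operator
`D^{(m)}_{z₁,…,z_m} = D_{z₁}⁺ ∘ D^{(m-1)}_{z₂,…,z_m}`. -/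
noncomputable def addCostIter : (m : ℕ) → (Fin m → Z) → (Measure Z → ℝ) → Measure Z → ℝ
  | 0, _, 𝔣 => 𝔣
  | m + 1, zs, 𝔣 => addCost (zs 0) (addCostIter m (fun i => zs i.succ) 𝔣)

/-- The alphabet `{L, R, B}` used in the combinatorial book-keeping of iterated
add-one-cost operators of a product. -/
inductive Letter : Type
  | L : Letter
  | R : Letter
  | B : Letter
  deriving DecidableEq

instance : Fintype Letter :=
  ⟨{Letter.L, Letter.R, Letter.B}, fun x => by cases x <;> simp⟩

/-- The operators `D_z^L`, `D_z^R`, `D_z^B` acting on pairs of representatives. -/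
noncomputable def pairStep (z : Z) :
    Letter → (Measure Z → ℝ) × (Measure Z → ℝ) → (Measure Z → ℝ) × (Measure Z → ℝ)
  | .L, XY => (addCost z XY.1, XY.2)
  | .R, XY => (XY.1, addCost z XY.2)
  | .B, XY => (addCost z XY.1, addCost z XY.2)

/-- The iterated operator `D^{[W]}_{z₁,…,z_m}` associated with a word `W ∈ {L,R,B}^m`. -/
noncomputable def pairIter : (m : ℕ) → (Fin m → Letter) → (Fin m → Z) →
    (Measure Z → ℝ) × (Measure Z → ℝ) → (Measure Z → ℝ) × (Measure Z → ℝ)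
  | 0, _, _, XY => XY
  | m + 1, W, zs, XY =>
      pairStep (zs 0) (W 0) (pairIter m (fun i => W i.succ) (fun i => zs i.succ) XY)

theorem Letter.sum_univ {M : Type*} [AddCommMonoid M] (f : Letter → M) :
    ∑ ℓ, f ℓ = f .L + f .R + f .B := by
  rw [show (Finset.univ : Finset Letter) = {.L, .R, .B} from rfl]
  simp [add_assoc]

theorem addCost_sum {ι : Type*} (s : Finset ι) (z : Z) (f : ι → Measure Z → ℝ) :
    addCost z (∑ i ∈ s, f i) = ∑ i ∈ s, addCost z (f i) := by
  ext χ
  simp [addCost, Finset.sum_apply, Finset.sum_sub_distrib]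

theorem addCost_mul (z : Z) (X Y : Measure Z → ℝ) :
    addCost z (X * Y) = addCost z X * Y + X * addCost z Y + addCost z X * addCost z Y := by
  ext χ
  simp only [addCost, Pi.mul_apply, Pi.add_apply]
  ring

theorem sum_pairStep_mul (z : Z) (XY : (Measure Z → ℝ) × (Measure Z → ℝ)) :
    ∑ ℓ, (pairStep z ℓ XY).1 * (pairStep z ℓ XY).2 = addCost z (XY.1 * XY.2) := by
  rw [Letter.sum_univ, addCost_mul]
  rfl

theorem pairIter_cons (m : ℕ) (ℓ : Letter) (W : Fin m → Letter) (zs : Fin (m + 1) → Z)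
    (XY : (Measure Z → ℝ) × (Measure Z → ℝ)) :
    pairIter (m + 1) (Fin.cons ℓ W) zs XY = pairStep (zs 0) ℓ (pairIter m W (Fin.tail zs) XY) :=
  rfl

theorem addCostIter_mul (X Y : Measure Z → ℝ) :
    ∀ (m : ℕ) (zs : Fin m → Z), addCostIter m zs (X * Y) =
      ∑ W : Fin m → Letter, (pairIter m W zs (X, Y)).1 * (pairIter m W zs (X, Y)).2
  | 0, _ => by simp [addCostIter, pairIter]
  | m + 1, zs => by
    calc addCostIter (m + 1) zs (X * Y)
        = ∑ W : Fin m → Letter, addCost (zs 0)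
            ((pairIter m W (Fin.tail zs) (X, Y)).1 * (pairIter m W (Fin.tail zs) (X, Y)).2) := by
          rw [← addCost_sum, ← addCostIter_mul X Y m]
          rfl
      _ = ∑ W : Fin m → Letter, ∑ ℓ, (pairIter (m + 1) (Fin.cons ℓ W) zs (X, Y)).1 *
            (pairIter (m + 1) (Fin.cons ℓ W) zs (X, Y)).2 := by
          simp only [pairIter_cons, sum_pairStep_mul]
      _ = ∑ W : Fin (m + 1) → Letter,
            (pairIter (m + 1) W zs (X, Y)).1 * (pairIter (m + 1) W zs (X, Y)).2 := by
          rw [← Fintype.sum_prod_type_right']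
          exact Fintype.sum_equiv (Fin.consEquiv fun _ => Letter) _ _ fun _ => rfl

theorem addCostIter_product_word_decomposition_general
    {Z : Type*} [MeasurableSpace Z] (μ : Measure Z)
    {Ω : Type*} [MeasurableSpace Ω] (P : Measure Ω)
    (S : PoissonRandomMeasure μ P)
    (𝔣 𝔤 : Measure Z → ℝ)
    (k : ℕ) (z : Fin k → Z) :
    ∀ ω, addCostIter k z (fun χ => 𝔣 χ * 𝔤 χ) (S.η ω) =
      ∑ W : Fin k → Letter,
        (pairIter k W z (𝔣, 𝔤)).1 (S.η ω) * (pairIter k W z (𝔣, 𝔤)).2 (S.η ω) := by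
  intro ω
  have h := congrFun (addCostIter_mul 𝔣 𝔤 k z) (S.η ω)
  simp only [Finset.sum_apply, Pi.mul_apply] at h
  exact h

/-- For `F = 𝔣(η)`, `G = 𝔤(η)`, `k ∈ ℕ` and `z₁,…,z_k ∈ Z`,
`D^{(k)}_{z₁,…,z_k}(FG) = ∑_{|W| = k} K(D^{[W]}_{z₁,…,z_k}(F, G))`, the sum running over
all words `W` of length `k` in the alphabet `{L, R, B}`. -/
theorem addCostIter_product_word_decomposition
    {Z : Type*} [MeasurableSpace Z] (μ : Measure Z) [SigmaFinite μ]
    {Ω : Type*} [MeasurableSpace Ω] (P : Measure Ω) [IsProbabilityMeasure P]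
    (S : PoissonRandomMeasure μ P)
    (𝔣 𝔤 : Measure Z → ℝ) (h𝔣 : Measurable 𝔣) (h𝔤 : Measurable 𝔤)
    (k : ℕ) (hk : 1 ≤ k) (z : Fin k → Z) :
    ∀ ω, addCostIter k z (fun χ => 𝔣 χ * 𝔤 χ) (S.η ω) =
      ∑ W : Fin k → Letter,
        (pairIter k W z (𝔣, 𝔤)).1 (S.η ω) * (pairIter k W z (𝔣, 𝔤)).2 (S.η ω) :=
  addCostIter_product_word_decomposition_general μ P S 𝔣 𝔤 k z

end PoissonFMT
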